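/- Let A_g^op ∈ GL₃(L) be the matrix with rows (0,0,ξ⁻¹), (1,0,0), (0,1,0), and let D_ξ := diag(1, ξ, ξ²). If A ∈ Mat₃(L) satisfies A^g = (A_g^op)⁻¹·A·A_g^op, then the matrix B := A^Σ·D_ξ satisfies B^g = A_g⁻¹·B·A_g. -/

import Mathlib

/-!
`A_g = !![0, 0, c; 1, 0, 0; 0, 1, 0]` (with `c = ξ`) is the companion matrix of `X³ - c`, and
`A_g^op` is the one of `X³ - c⁻¹`. Applying `g` entrywise commutes with `Σ`, so the hypothesis
gives `(A^Σ)^g = Σ((A_g^op)⁻¹ · A · A_g^op)`. Both factors are monomial matrices, which `Σ`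
transports: the cyclic row shift `(A_g^op)⁻¹` comes out as `c · A_g⁻¹`, and the column shift
`A_g^op` as the companion matrix of `X³ - c⁻²`. Since `g` fixes `D_ξ`, what remains is the
identity `c · (companion of X³ - c⁻²) · D_ξ = D_ξ · A_g`.
-/

open Matrix

/-- For `A ∈ Mat₃`, the matrix `A^Σ` with entries `(A^Σ)_{ij} = ∏_{k≠i} A_{kj}`:
the `j`-th column of `A^Σ` is the standard quadratic map `Σ(x,y,z) = (yz,xz,xy)`
applied to the `j`-th column of `A`. -/
def sigmaMat {C : Type*} [CommRing C] (A : Matrix (Fin 3) (Fin 3) C) :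
    Matrix (Fin 3) (Fin 3) C :=
  Matrix.of fun i j => A (i + 1) j * A (i + 2) j

section CommRing

variable {R : Type*} [CommRing R]

@[simp]
theorem sigmaMat_apply (A : Matrix (Fin 3) (Fin 3) R) (i j : Fin 3) :
    sigmaMat A i j = A (i + 1) j * A (i + 2) j :=
  rfl

theorem sigmaMat_map {S F : Type*} [CommRing S] [FunLike F R S] [RingHomClass F R S] (f : F)
    (A : Matrix (Fin 3) (Fin 3) R) : (sigmaMat A).map f = sigmaMat (A.map f) := by
  ext i j
  simp

theorem sigmaMat_mul_companion (A : Matrix (Fin 3) (Fin 3) R) (d : R) :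
    sigmaMat (A * !![0, 0, d; 1, 0, 0; 0, 1, 0]) =
      sigmaMat A * !![0, 0, d ^ 2; 1, 0, 0; 0, 1, 0] := by
  ext i j
  fin_cases i <;> fin_cases j <;> simp [mul_apply, Fin.sum_univ_three] <;> ring

end CommRing

section Field

variable {K : Type*} [Field K] {c : K}

theorem inv_companion (hc : c ≠ 0) :
    (!![0, 0, c; 1, 0, 0; 0, 1, 0])⁻¹ = !![0, 1, 0; 0, 0, 1; c⁻¹, 0, 0] := by
  refine inv_eq_left_inv ?_
  ext i j
  fin_cases i <;> fin_cases j <;> simp [mul_apply, Fin.sum_univ_three, one_apply, hc]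

theorem sigmaMat_companion_transpose_mul (hc : c ≠ 0) (A : Matrix (Fin 3) (Fin 3) K) :
    sigmaMat (!![0, 1, 0; 0, 0, 1; c, 0, 0] * A) =
      c • (!![0, 1, 0; 0, 0, 1; c⁻¹, 0, 0] * sigmaMat A) := by
  ext i j
  fin_cases i <;> fin_cases j <;> simp [vecMul, dotProduct, Fin.sum_univ_three, hc] <;> ring

theorem smul_companion_mul_diagonal (hc : c ≠ 0) :
    c • (!![0, 0, c⁻¹ ^ 2; 1, 0, 0; 0, 1, 0] * diagonal ![1, c, c ^ 2]) =
      diagonal ![1, c, c ^ 2] * !![0, 0, c; 1, 0, 0; 0, 1, 0] := by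
  ext i j
  fin_cases i <;> fin_cases j <;> simp [vecMul, dotProduct, Fin.sum_univ_three, hc]
  field_simp

end Field

theorem stmt_11 (k L : Type*) [Field k] [Field L] [Algebra k L]
    (g : L ≃ₐ[k] L)
    (ξ : k) (hξ : ξ ≠ 0)
    (A : Matrix (Fin 3) (Fin 3) L)
    (hA : A.map ⇑g =
        (!![0, 0, (algebraMap k L ξ)⁻¹; 1, 0, 0; 0, 1, 0])⁻¹ * A *
          !![0, 0, (algebraMap k L ξ)⁻¹; 1, 0, 0; 0, 1, 0]) :
    (sigmaMat A * Matrix.diagonal ![1, algebraMap k L ξ, algebraMap k L ξ ^ 2]).map ⇑g =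
      (!![0, 0, algebraMap k L ξ; 1, 0, 0; 0, 1, 0])⁻¹ *
          (sigmaMat A * Matrix.diagonal ![1, algebraMap k L ξ, algebraMap k L ξ ^ 2]) *
        !![0, 0, algebraMap k L ξ; 1, 0, 0; 0, 1, 0] := by
  set c := algebraMap k L ξ
  have hc : c ≠ 0 := (map_ne_zero _).mpr hξ
  have hD : (diagonal ![1, c, c ^ 2]).map g = diagonal ![1, c, c ^ 2] := by
    rw [diagonal_map (map_zero g)]
    congr 1
    ext i
    fin_cases i <;> simp [c]
  rw [inv_companion (inv_ne_zero hc), inv_inv] at hA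
  calc (sigmaMat A * diagonal ![1, c, c ^ 2]).map g
      = sigmaMat (A.map g) * diagonal ![1, c, c ^ 2] := by
        rw [← AlgEquiv.mapMatrix_apply, map_mul, AlgEquiv.mapMatrix_apply,
          AlgEquiv.mapMatrix_apply, hD, sigmaMat_map]
    _ = c • (!![0, 1, 0; 0, 0, 1; c⁻¹, 0, 0] * sigmaMat A) *
          !![0, 0, c⁻¹ ^ 2; 1, 0, 0; 0, 1, 0] * diagonal ![1, c, c ^ 2] := by
        rw [hA, sigmaMat_mul_companion, sigmaMat_companion_transpose_mul hc]
    _ = _ := by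
        rw [inv_companion hc]
        simp only [Matrix.mul_assoc, ← smul_companion_mul_diagonal hc, Matrix.mul_smul,
          Matrix.smul_mul]
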